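/- arXiv:2207.05328 — 6 statements merged into one kernel-verified Lean document; each statement's English description precedes it below -/
import Mathlib

section
/- Let X, Y be independent real-valued random variables with P(X = Y) = 0 and p = P(Y > X) ∈ (0,1). If min(X,Y) is independent of the event {Y > X}, then for every real x, P(min(X,Y) > x) = E[(1 − F_Y(X)) 1_{X > x}] / p = E[(1 − F_X(Y)) 1_{Y > x}] / (1 − p). -/
open MeasureTheory ProbabilityTheory Set

/-!
On `{x < min X Y}` exactly one of `X < Y`, `Y < X` holds almost surely, so independence of the
minimum from `{X < Y}` gives `P(min > x, X < Y) = P(min > x) p` and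
`P(min > x, Y < X) = P(min > x) (1 - p)`. The left-hand sides are `P(x < X < Y)` and
`P(x < Y < X)`, and by independence of `X` and `Y` (Fubini for the product law)
`P(x < X < Y) = ∫_{X > x} P(Y > a)|_{a = X} dP = E[(1 - F_Y(X)) 1_{X > x}]`.
-/

section

variable {Ω : Type*} [MeasurableSpace Ω] {μ : Measure Ω} {X Y : Ω → ℝ}

lemma measure_mem_and_lt_eq_lintegral [IsFiniteMeasure μ] (hX : Measurable X)
    (hY : Measurable Y) (hind : IndepFun X Y μ) {s : Set ℝ} (hs : MeasurableSet s) :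
    μ {ω | X ω ∈ s ∧ X ω < Y ω} = ∫⁻ ω in X ⁻¹' s, μ {ω' | X ω < Y ω'} ∂μ := by
  set S := {q : ℝ × ℝ | q.1 ∈ s ∧ q.1 < q.2}
  have hS : MeasurableSet S :=
    (measurable_fst hs).inter (measurableSet_lt measurable_fst measurable_snd)
  have hsection (a : ℝ) :
      μ.map Y (Prod.mk a ⁻¹' S) = s.indicator (fun a ↦ μ.map Y (Ioi a)) a := by
    by_cases ha : a ∈ s <;> simp [S, ha, Ioi]
  have hmono : Antitone fun a ↦ μ.map Y (Ioi a) :=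
    fun a b hab ↦ measure_mono (Ioi_subset_Ioi hab)
  calc μ {ω | X ω ∈ s ∧ X ω < Y ω} = μ.map (fun ω ↦ (X ω, Y ω)) S := by
        rw [Measure.map_apply (hX.prodMk hY) hS]; rfl
    _ = ∫⁻ a in s, μ.map Y (Ioi a) ∂μ.map X := by
        rw [(indepFun_iff_map_prod_eq_prod_map_map hX.aemeasurable hY.aemeasurable).mp hind,
          Measure.prod_apply hS, lintegral_congr hsection, lintegral_indicator hs]
    _ = ∫⁻ ω in X ⁻¹' s, μ {ω' | X ω < Y ω'} ∂μ := by
        rw [setLIntegral_map hs hmono.measurable hX]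
        simp_rw [Measure.map_apply hY measurableSet_Ioi]
        rfl

lemma measureReal_lt_eq_one_sub [IsProbabilityMeasure μ] (hY : Measurable Y) (a : ℝ) :
    μ.real {ω | a < Y ω} = 1 - μ.real {ω | Y ω ≤ a} := by
  rw [← probReal_compl_eq_one_sub (measurableSet_le hY measurable_const)]
  congr 1; ext; simp

lemma measureReal_mem_and_lt_eq_setIntegral [IsProbabilityMeasure μ] (hX : Measurable X)
    (hY : Measurable Y) (hind : IndepFun X Y μ) {s : Set ℝ} (hs : MeasurableSet s) :
    μ.real {ω | X ω ∈ s ∧ X ω < Y ω}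
      = ∫ ω in X ⁻¹' s, (1 - μ.real {ω' | Y ω' ≤ X ω}) ∂μ := by
  have hmono : Antitone fun a ↦ μ {ω' | a < Y ω'} :=
    fun a b hab ↦ measure_mono fun ω h ↦ lt_of_le_of_lt hab h
  simp_rw [← measureReal_lt_eq_one_sub hY, measureReal_def]
  rw [integral_toReal (f := fun ω ↦ μ {ω' | X ω < Y ω'})
      (hmono.measurable.comp hX).aemeasurable (ae_of_all _ fun _ ↦ measure_lt_top _ _),
    measure_mem_and_lt_eq_lintegral hX hY hind hs]

lemma measure_inter_lt_add_measure_inter_gt (hX : Measurable X) (hY : Measurable Y)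
    (hXY : μ {ω | X ω = Y ω} = 0) (E : Set Ω) :
    μ (E ∩ {ω | X ω < Y ω}) + μ (E ∩ {ω | Y ω < X ω}) = μ E := by
  have : E ∩ {ω | Y ω < X ω} = (E \ {ω | X ω < Y ω}) \ {ω | X ω = Y ω} := by
    ext ω; simp only [mem_inter_iff, mem_sdiff, mem_ofPred_eq]
    constructor
    · rintro ⟨hE, h⟩; exact ⟨⟨hE, h.not_gt⟩, h.ne'⟩
    · rintro ⟨⟨hE, h₁⟩, h₂⟩; exact ⟨hE, lt_of_le_of_ne (not_lt.mp h₁) (Ne.symm h₂)⟩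
  rw [this, measure_sdiff_null hXY, measure_inter_add_sdiff E (measurableSet_lt hX hY)]

end

theorem stmt4_general {Ω : Type*} [MeasurableSpace Ω] (μ : Measure Ω) [IsProbabilityMeasure μ]
    (X Y : Ω → ℝ) (hX : Measurable X) (hY : Measurable Y)
    (hind : IndepFun X Y μ) (hXY : μ {ω | X ω = Y ω} = 0)
    (p : ℝ) (hp0 : 0 < p) (hp1 : p < 1)
    (hminind : ∀ x : ℝ,
      (μ ({ω | x < min (X ω) (Y ω)} ∩ {ω | X ω < Y ω})).toReal
        = (μ {ω | x < min (X ω) (Y ω)}).toReal * p) :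
    ∀ x : ℝ,
      (μ {ω | x < min (X ω) (Y ω)}).toReal
        = (∫ ω in {ω | x < X ω}, (1 - (μ {ω' | Y ω' ≤ X ω}).toReal) ∂μ) / p
      ∧ (μ {ω | x < min (X ω) (Y ω)}).toReal
        = (∫ ω in {ω | x < Y ω}, (1 - (μ {ω' | X ω' ≤ Y ω}).toReal) ∂μ) / (1 - p) := by
  intro x
  set E := {ω | x < min (X ω) (Y ω)}
  have hsplit : μ.real (E ∩ {ω | X ω < Y ω}) + μ.real (E ∩ {ω | Y ω < X ω}) = μ.real E := by
    simp only [measureReal_def]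
    rw [← ENNReal.toReal_add (measure_ne_top _ _) (measure_ne_top _ _),
      measure_inter_lt_add_measure_inter_gt hX hY hXY]
  have hX_lt_set : E ∩ {ω | X ω < Y ω} = {ω | X ω ∈ Ioi x ∧ X ω < Y ω} := by
    ext ω; simp only [E, mem_inter_iff, mem_ofPred_eq, mem_Ioi, lt_min_iff]
    exact ⟨fun ⟨⟨h, _⟩, h'⟩ ↦ ⟨h, h'⟩, fun ⟨h, h'⟩ ↦ ⟨⟨h, h.trans h'⟩, h'⟩⟩
  have hY_lt_set : E ∩ {ω | Y ω < X ω} = {ω | Y ω ∈ Ioi x ∧ Y ω < X ω} := by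
    ext ω; simp only [E, mem_inter_iff, mem_ofPred_eq, mem_Ioi, lt_min_iff]
    exact ⟨fun ⟨⟨_, h⟩, h'⟩ ↦ ⟨h, h'⟩, fun ⟨h, h'⟩ ↦ ⟨⟨h.trans h', h⟩, h'⟩⟩
  have hX_lt : μ.real (E ∩ {ω | X ω < Y ω}) = μ.real E * p := hminind x
  have hY_lt : μ.real (E ∩ {ω | Y ω < X ω}) = μ.real E * (1 - p) := by linarith
  rw [hX_lt_set, measureReal_mem_and_lt_eq_setIntegral hX hY hind measurableSet_Ioi] at hX_lt
  rw [hY_lt_set, measureReal_mem_and_lt_eq_setIntegral hY hX hind.symm measurableSet_Ioi] at hY_lt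
  constructor
  · field_simp
    exact hX_lt.symm
  · field_simp [(sub_pos.2 hp1).ne']
    exact hY_lt.symm

/-- If min(X,Y) is independent of {Y > X}, then the survival function of min(X,Y) equals
E[(1 − F_Y(X)) 1_{X > x}] / p and E[(1 − F_X(Y)) 1_{Y > x}] / (1 − p). -/
theorem stmt4 {Ω : Type*} [MeasurableSpace Ω] (μ : Measure Ω) [IsProbabilityMeasure μ]
    (X Y : Ω → ℝ) (hX : Measurable X) (hY : Measurable Y)
    (hind : IndepFun X Y μ) (hXY : μ {ω | X ω = Y ω} = 0)
    (p : ℝ) (hp : (μ {ω | X ω < Y ω}).toReal = p) (hp0 : 0 < p) (hp1 : p < 1)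
    (hminind : ∀ x : ℝ,
      (μ ({ω | x < min (X ω) (Y ω)} ∩ {ω | X ω < Y ω})).toReal
        = (μ {ω | x < min (X ω) (Y ω)}).toReal * p) :
    ∀ x : ℝ,
      (μ {ω | x < min (X ω) (Y ω)}).toReal
        = (∫ ω in {ω | x < X ω}, (1 - (μ {ω' | Y ω' ≤ X ω}).toReal) ∂μ) / p
      ∧ (μ {ω | x < min (X ω) (Y ω)}).toReal
        = (∫ ω in {ω | x < Y ω}, (1 - (μ {ω' | X ω' ≤ Y ω}).toReal) ∂μ) / (1 - p) :=
  stmt4_general μ X Y hX hY hind hXY p hp0 hp1 hminind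
end

section
/- Let X, Y be independent real-valued random variables with P(X = Y) = 0 and P(Y > X) ∈ (0,1). If min(X,Y) is independent of {Y > X}, then the cdf of min(X,Y) is continuous on all of ℝ. -/
/-!
Let `A = {X < Y}`. Independence of `min X Y` from `A` on the π-system of events
`{x < min X Y}` extends to all of `σ(min X Y)`. At a point `x`, the events
`{min X Y = x} ∩ A = {X = x, Y > x}` and `{min X Y = x} ∩ Aᶜ = {X ≥ x, Y = x}` have, by
independence from `A`, probabilities whose product is `P(min X Y = x)² P(A) P(Aᶜ)`; by
independence of `X` and `Y` that product contains the factor `P(X = x) P(Y = x) ≤ P(X = Y) = 0`.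
Since `0 < P(A) < 1`, `min X Y` has no atoms, so its cdf is continuous.
-/

open MeasureTheory ProbabilityTheory Set MeasurableSpace

theorem StieltjesFunction.continuous_of_nullSingletonClass (f : StieltjesFunction ℝ)
    [NullSingletonClass f.measure] : Continuous f := by
  refine continuous_iff_continuousAt.2 fun x => ?_
  have hjump : f x ≤ Function.leftLim f x := by
    have := MeasureTheory.measure_singleton (μ := f.measure) x
    rw [f.measure_singleton, ENNReal.ofReal_eq_zero] at this
    linarith
  rw [f.mono.continuousAt_iff_leftLim_eq_rightLim, f.rightLim_eq]
  exact le_antisymm (f.mono.leftLim_le le_rfl) hjump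

theorem ProbabilityTheory.continuous_cdf (ν : Measure ℝ) [IsProbabilityMeasure ν]
    [NullSingletonClass ν] : Continuous (cdf ν) :=
  have : NullSingletonClass (cdf ν).measure := by rwa [measure_cdf]
  (cdf ν).continuous_of_nullSingletonClass

theorem ProbabilityTheory.indep_comap_generateFrom_of_forall_Ioi {Ω : Type*}
    [MeasurableSpace Ω] {μ : Measure Ω} [IsZeroOrProbabilityMeasure μ] {M : Ω → ℝ}
    (hM : Measurable M) {A : Set Ω} (hA : MeasurableSet A)
    (h : ∀ x, μ (M ⁻¹' Ioi x ∩ A) = μ (M ⁻¹' Ioi x) * μ A) :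
    Indep (MeasurableSpace.comap M inferInstance) (generateFrom {A}) μ := by
  refine IndepSets.indep hM.comap_le (generateFrom_le (by simpa using hA))
    (isPiSystem_Ioi.comap M) (IsPiSystem.singleton A) ?_ rfl ?_
  · rw [BorelSpace.measurable_eq (α := ℝ), borel_eq_generateFrom_Ioi, comap_generateFrom]; rfl
  · rw [IndepSets_iff]
    rintro _ _ ⟨_, ⟨x, rfl⟩, rfl⟩ rfl
    exact h x

theorem setOf_min_eq_inter_setOf_lt {Ω α : Type*} [LinearOrder α] (X Y : Ω → α) (x : α) :
    {ω | min (X ω) (Y ω) = x} ∩ {ω | X ω < Y ω} = X ⁻¹' {x} ∩ Y ⁻¹' Ioi x := by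
  ext ω
  simp only [mem_inter_iff, mem_ofPred_eq, mem_preimage, mem_singleton_iff, mem_Ioi]
  constructor
  · rintro ⟨hm, hXY⟩
    rw [min_eq_left hXY.le] at hm
    exact ⟨hm, hm ▸ hXY⟩
  · rintro ⟨rfl, hY⟩
    exact ⟨min_eq_left hY.le, hY⟩

theorem setOf_min_eq_inter_compl_setOf_lt {Ω α : Type*} [LinearOrder α] (X Y : Ω → α)
    (x : α) :
    {ω | min (X ω) (Y ω) = x} ∩ {ω | X ω < Y ω}ᶜ = X ⁻¹' Ici x ∩ Y ⁻¹' {x} := by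
  ext ω
  simp only [mem_inter_iff, mem_compl_iff, mem_ofPred_eq, not_lt, mem_preimage,
    mem_singleton_iff, mem_Ici]
  constructor
  · rintro ⟨hm, hYX⟩
    rw [min_eq_right hYX] at hm
    exact ⟨hm ▸ hYX, hm⟩
  · rintro ⟨hX, rfl⟩
    exact ⟨min_eq_right hX, hX⟩

theorem ProbabilityTheory.IndepFun.measure_min_eq_eq_zero {Ω : Type*} [MeasurableSpace Ω]
    {μ : Measure Ω} {X Y : Ω → ℝ} (hind : IndepFun X Y μ) (hXY : μ {ω | X ω = Y ω} = 0)
    (hlt : μ {ω | X ω < Y ω} ≠ 0) (hge : μ {ω | X ω < Y ω}ᶜ ≠ 0)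
    (hmin : Indep (MeasurableSpace.comap (fun ω => min (X ω) (Y ω)) inferInstance)
      (generateFrom {{ω | X ω < Y ω}}) μ) (x : ℝ) :
    μ {ω | min (X ω) (Y ω) = x} = 0 := by
  set A := {ω | X ω < Y ω}
  set m := μ {ω | min (X ω) (Y ω) = x}
  have hatom : MeasurableSet[MeasurableSpace.comap (fun ω => min (X ω) (Y ω)) inferInstance]
      {ω | min (X ω) (Y ω) = x} := ⟨{x}, measurableSet_singleton x, rfl⟩
  have hA : MeasurableSet[generateFrom {A}] A := measurableSet_generateFrom rfl
  have h_lt : μ ({ω | min (X ω) (Y ω) = x} ∩ A) = m * μ A :=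
    (Indep_iff _ _ μ).1 hmin _ _ hatom hA
  have h_ge : μ ({ω | min (X ω) (Y ω) = x} ∩ Aᶜ) = m * μ Aᶜ :=
    (Indep_iff _ _ μ).1 hmin _ _ hatom hA.compl
  have h_diag : μ (X ⁻¹' {x}) * μ (Y ⁻¹' {x}) = 0 := by
    rw [← hind.measure_inter_preimage_eq_mul _ _ (measurableSet_singleton x)
      (measurableSet_singleton x)]
    exact measure_mono_null (fun ω ⟨hX, hY⟩ => hX.trans hY.symm) hXY
  have h_prod : m * μ A * (m * μ Aᶜ) = 0 := by
    rw [← h_lt, ← h_ge, setOf_min_eq_inter_setOf_lt, setOf_min_eq_inter_compl_setOf_lt,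
      hind.measure_inter_preimage_eq_mul _ _ (measurableSet_singleton x) measurableSet_Ioi,
      hind.measure_inter_preimage_eq_mul _ _ measurableSet_Ici (measurableSet_singleton x)]
    calc _ = μ (X ⁻¹' {x}) * μ (Y ⁻¹' {x}) * (μ (Y ⁻¹' Ioi x) * μ (X ⁻¹' Ici x)) := by
          ring
      _ = 0 := by rw [h_diag, zero_mul]
  simpa [hlt, hge] using h_prod

/-- If min(X,Y) is independent of {Y > X} (with P(X=Y)=0, P(Y>X)∈(0,1)), the cdf of
min(X,Y) is continuous on ℝ. -/
theorem stmt5 {Ω : Type*} [MeasurableSpace Ω] (μ : Measure Ω) [IsProbabilityMeasure μ]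
    (X Y : Ω → ℝ) (hX : Measurable X) (hY : Measurable Y)
    (hind : IndepFun X Y μ) (hXY : μ {ω | X ω = Y ω} = 0)
    (hp0 : 0 < (μ {ω | X ω < Y ω}).toReal) (hp1 : (μ {ω | X ω < Y ω}).toReal < 1)
    (hminind : ∀ x : ℝ,
      (μ ({ω | x < min (X ω) (Y ω)} ∩ {ω | X ω < Y ω})).toReal
        = (μ {ω | x < min (X ω) (Y ω)}).toReal * (μ {ω | X ω < Y ω}).toReal) :
    Continuous (fun x : ℝ => (μ {ω | min (X ω) (Y ω) ≤ x}).toReal) := by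
  set M := fun ω => min (X ω) (Y ω)
  have hM : Measurable M := hX.min hY
  have hA : MeasurableSet {ω | X ω < Y ω} := measurableSet_lt hX hY
  have hMA : Indep (MeasurableSpace.comap M inferInstance) (generateFrom {{ω | X ω < Y ω}}) μ :=
    indep_comap_generateFrom_of_forall_Ioi hM hA fun x => by
      rw [← ENNReal.toReal_eq_toReal_iff' (by finiteness) (by finiteness), ENNReal.toReal_mul]
      exact hminind x
  have hlt : μ {ω | X ω < Y ω} ≠ 0 := fun h => by simp [h] at hp0
  have hge : μ {ω | X ω < Y ω}ᶜ ≠ 0 := by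
    rw [prob_compl_eq_one_sub hA]
    exact (tsub_pos_of_lt ((ENNReal.toReal_lt_toReal (by finiteness) ENNReal.one_ne_top).1
      (by simpa using hp1))).ne'
  have : NullSingletonClass (μ.map M) := ⟨fun x => by
    rw [Measure.map_apply hM (measurableSet_singleton x)]
    exact hind.measure_min_eq_eq_zero hXY hlt hge hMA x⟩
  have := Measure.isProbabilityMeasure_map (μ := μ) hM.aemeasurable
  convert continuous_cdf (μ.map M) using 1
  ext x
  rw [cdf_eq_real, measureReal_def, Measure.map_apply hM measurableSet_Iic]
  rfl
end

section
/- Let X, Y be independent real-valued random variables with P(X = Y) = 0 and P(Y > X) ∈ (0,1), and suppose min(X,Y) is independent of {Y > X}. Then F_X is continuous at every point x with F_Y(x) < 1, and F_Y is continuous at every point x with F_X(x) < 1. -/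
/-!
Write `α = P(X = x)`, `β = P(Y = x)`, `γ = P(Y > x)` and `p = P(X < Y)`. Independence of `min X Y`
from `{X < Y}` on the rays `{min X Y > t}` extends to all Borel sets, in particular to the atom
`{min X Y = x}`. If `α > 0`, then `β = 0` because `αβ = P(X = Y = x) ≤ P(X = Y) = 0`, so up to a null
set the atom is `{X = x < Y}`, of probability `αγ`. Independence then gives `αγ = αγ p`, impossible
when `γ > 0` and `p < 1`. Exchanging `X` and `Y`, with `{Y < X} ⊆ {X < Y}ᶜ` of probability `1 - p`,
gives the statement for `Y`.
-/

open MeasureTheory ProbabilityTheory Set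

theorem continuousAt_cdf_of_measure_singleton_eq_zero (ν : Measure ℝ) [IsProbabilityMeasure ν]
    {x : ℝ} (hx : ν {x} = 0) : ContinuousAt (cdf ν) x := by
  have hjump : ENNReal.ofReal (cdf ν x - Function.leftLim (cdf ν) x) = 0 := by
    rw [← StieltjesFunction.measure_singleton, measure_cdf, hx]
  have hle : Function.leftLim (cdf ν) x ≤ cdf ν x := (monotone_cdf ν).leftLim_le le_rfl
  rw [(monotone_cdf ν).continuousAt_iff_leftLim_eq_rightLim, (cdf ν).rightLim_eq]
  linarith [ENNReal.ofReal_eq_zero.mp hjump]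

section
variable {Ω : Type*} [MeasurableSpace Ω] {μ : Measure Ω}

theorem continuousAt_measure_le_of_measure_eq_zero [IsProbabilityMeasure μ] {Z : Ω → ℝ}
    (hZ : Measurable Z) {x : ℝ} (hx : μ {ω | Z ω = x} = 0) :
    ContinuousAt (fun t => (μ {ω | Z ω ≤ t}).toReal) x := by
  have := Measure.isProbabilityMeasure_map (μ := μ) hZ.aemeasurable
  have hcdf : (fun t => (μ {ω | Z ω ≤ t}).toReal) = cdf (μ.map Z) := by
    ext t
    rw [cdf_eq_real, measureReal_def, Measure.map_apply hZ measurableSet_Iic]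
    rfl
  rw [hcdf]
  apply continuousAt_cdf_of_measure_singleton_eq_zero
  rwa [Measure.map_apply hZ (measurableSet_singleton x)]

theorem measure_lt_ne_zero_of_toReal_measure_le_lt_one [IsProbabilityMeasure μ] {Z : Ω → ℝ}
    (hZ : Measurable Z) {x : ℝ} (h : (μ {ω | Z ω ≤ x}).toReal < 1) : μ {ω | x < Z ω} ≠ 0 := by
  have hcompl : {ω | x < Z ω} = {ω | Z ω ≤ x}ᶜ := by ext; simp
  rw [hcompl, Ne, prob_compl_eq_zero_iff (measurableSet_le hZ measurable_const)]
  rintro h1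
  simp [h1] at h

theorem measure_preimage_inter_eq_mul_of_forall_Ioi [IsProbabilityMeasure μ] {f : Ω → ℝ}
    (hf : Measurable f) {A : Set Ω}
    (h : ∀ t, μ (f ⁻¹' Ioi t ∩ A) = μ (f ⁻¹' Ioi t) * μ A) {s : Set ℝ} (hs : MeasurableSet s) :
    μ (f ⁻¹' s ∩ A) = μ (f ⁻¹' s) * μ A := by
  -- Both measures have total mass `μ A`, so agreeing on the π-system of rays suffices.
  have hmap : (μ.restrict A).map f = μ A • μ.map f := by
    refine ext_of_generate_finite _ (BorelSpace.measurable_eq.trans (borel_eq_generateFrom_Ioi ℝ))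
      isPiSystem_Ioi ?_ ?_
    · rintro _ ⟨t, rfl⟩
      simp [Measure.map_apply hf measurableSet_Ioi, Measure.restrict_apply (hf measurableSet_Ioi),
        h t, mul_comm]
    · simp [Measure.map_apply hf MeasurableSet.univ]
  have := congrArg (fun ν : Measure ℝ => ν s) hmap
  simpa [Measure.map_apply hf hs, Measure.restrict_apply (hf hs), mul_comm] using this

theorem measure_inter_compl_eq_mul [IsProbabilityMeasure μ] {S A : Set Ω} (hA : MeasurableSet A)
    (h : μ (S ∩ A) = μ S * μ A) : μ (S ∩ Aᶜ) = μ S * μ Aᶜ := by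
  rw [prob_compl_eq_one_sub hA, ENNReal.mul_sub (fun _ _ => measure_ne_top μ S), mul_one, ← h,
    ← sdiff_eq]
  exact ENNReal.eq_sub_of_add_eq (measure_ne_top μ _)
    ((add_comm _ _).trans (measure_inter_add_sdiff S hA))

theorem measure_eq_zero_of_measure_min_eq_inter_le [IsFiniteMeasure μ] {X Y : Ω → ℝ}
    (hind : IndepFun X Y μ) (hXY : μ {ω | X ω = Y ω} = 0) {x : ℝ} {q : ENNReal} (hq : q < 1)
    (hmin : μ ({ω | min (X ω) (Y ω) = x} ∩ {ω | X ω < Y ω})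
      ≤ μ {ω | min (X ω) (Y ω) = x} * q)
    (hYx : μ {ω | x < Y ω} ≠ 0) : μ {ω | X ω = x} = 0 := by
  by_contra hXx
  have hYeq : μ {ω | Y ω = x} = 0 := by
    have hprod : μ (X ⁻¹' {x}) * μ (Y ⁻¹' {x}) = 0 := by
      rw [← hind.measure_inter_preimage_eq_mul _ _ (measurableSet_singleton x)
        (measurableSet_singleton x)]
      exact measure_mono_null (fun ω ⟨h1, h2⟩ => h1.trans h2.symm) hXY
    exact (mul_eq_zero.mp hprod).resolve_left hXx
  set c := μ {ω | X ω = x} * μ {ω | x < Y ω}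
  have hc : c = μ (X ⁻¹' {x} ∩ Y ⁻¹' Ioi x) :=
    (hind.measure_inter_preimage_eq_mul _ _ (measurableSet_singleton x) measurableSet_Ioi).symm
  have hinter : {ω | min (X ω) (Y ω) = x} ∩ {ω | X ω < Y ω} = X ⁻¹' {x} ∩ Y ⁻¹' Ioi x := by
    ext ω
    simp only [mem_inter_iff, mem_ofPred_eq, mem_preimage, mem_singleton_iff, mem_Ioi]
    constructor
    · rintro ⟨h1, h2⟩
      rw [min_eq_left h2.le] at h1
      exact ⟨h1, h1 ▸ h2⟩
    · rintro ⟨rfl, h2⟩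
      exact ⟨min_eq_left h2.le, h2⟩
  have hsub : {ω | min (X ω) (Y ω) = x} ⊆ (X ⁻¹' {x} ∩ Y ⁻¹' Ioi x) ∪ {ω | Y ω = x} := by
    intro ω h
    simp only [mem_ofPred_eq, mem_union, mem_inter_iff, mem_preimage, mem_singleton_iff,
      mem_Ioi] at h ⊢
    rcases lt_trichotomy (X ω) (Y ω) with hlt | heq | hgt
    · rw [min_eq_left hlt.le] at h
      exact Or.inl ⟨h, h ▸ hlt⟩
    · rw [heq, min_self] at h
      exact Or.inr h
    · rw [min_eq_right hgt.le] at h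
      exact Or.inr h
  have hmin_le : μ {ω | min (X ω) (Y ω) = x} ≤ c := by
    calc μ {ω | min (X ω) (Y ω) = x}
        ≤ μ (X ⁻¹' {x} ∩ Y ⁻¹' Ioi x) + μ {ω | Y ω = x} := (measure_mono hsub).trans (measure_union_le _ _)
      _ = c := by rw [hYeq, add_zero, hc]
  have hlt : c * q < c := by
    rw [mul_comm]
    simpa using ENNReal.mul_lt_mul_left (mul_ne_zero hXx hYx) (by finiteness) hq
  refine hlt.not_ge ?_
  calc c = μ ({ω | min (X ω) (Y ω) = x} ∩ {ω | X ω < Y ω}) := by rw [hinter, hc]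
    _ ≤ μ {ω | min (X ω) (Y ω) = x} * q := hmin
    _ ≤ c * q := by gcongr

end

/-- Under independence of min(X,Y) and {Y > X}: F_X is continuous wherever F_Y < 1 and
F_Y is continuous wherever F_X < 1. -/
theorem stmt6 {Ω : Type*} [MeasurableSpace Ω] (μ : Measure Ω) [IsProbabilityMeasure μ]
    (X Y : Ω → ℝ) (hX : Measurable X) (hY : Measurable Y)
    (hind : IndepFun X Y μ) (hXY : μ {ω | X ω = Y ω} = 0)
    (hp0 : 0 < (μ {ω | X ω < Y ω}).toReal) (hp1 : (μ {ω | X ω < Y ω}).toReal < 1)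
    (hminind : ∀ x : ℝ,
      (μ ({ω | x < min (X ω) (Y ω)} ∩ {ω | X ω < Y ω})).toReal
        = (μ {ω | x < min (X ω) (Y ω)}).toReal * (μ {ω | X ω < Y ω}).toReal) :
    ∀ x : ℝ,
      ((μ {ω | Y ω ≤ x}).toReal < 1 →
        ContinuousAt (fun t => (μ {ω | X ω ≤ t}).toReal) x)
      ∧ ((μ {ω | X ω ≤ x}).toReal < 1 →
        ContinuousAt (fun t => (μ {ω | Y ω ≤ t}).toReal) x) := by
  intro x
  set A := {ω | X ω < Y ω}
  have hA : MeasurableSet A := measurableSet_lt hX hY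
  have hatom : μ ({ω | min (X ω) (Y ω) = x} ∩ A) = μ {ω | min (X ω) (Y ω) = x} * μ A := by
    refine measure_preimage_inter_eq_mul_of_forall_Ioi (hX.min hY) (fun t => ?_)
      (measurableSet_singleton x)
    rw [← ENNReal.toReal_eq_toReal_iff' (by finiteness) (by finiteness), ENNReal.toReal_mul]
    exact hminind t
  constructor
  · intro hFY
    refine continuousAt_measure_le_of_measure_eq_zero hX
      (measure_eq_zero_of_measure_min_eq_inter_le hind hXY ?_ hatom.le
        (measure_lt_ne_zero_of_toReal_measure_le_lt_one hY hFY))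
    rwa [← ENNReal.toReal_lt_toReal (by finiteness) ENNReal.one_ne_top, ENNReal.toReal_one]
  · intro hFX
    have hatom_compl := measure_inter_compl_eq_mul hA hatom
    refine continuousAt_measure_le_of_measure_eq_zero hY
      (measure_eq_zero_of_measure_min_eq_inter_le hind.symm (by simpa [eq_comm] using hXY)
        (q := μ Aᶜ) ?_ ?_ (measure_lt_ne_zero_of_toReal_measure_le_lt_one hX hFX))
    · rw [prob_compl_eq_one_sub hA]
      exact ENNReal.sub_lt_self ENNReal.one_ne_top one_ne_zero (ENNReal.toReal_pos_iff.mp hp0).1.ne'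
    · simp_rw [min_comm (Y _)]
      rw [← hatom_compl]
      exact measure_mono (inter_subset_inter_right _ fun ω (h : Y ω < X ω) => h.not_gt)
end

section
/- Let F be a continuous cdf and let X, Y be independent random variables with survival functions 1 − F_X = (1 − F)^λ and 1 − F_Y = (1 − F)^μ for some λ, μ > 0. Then P(min(X,Y) > x, Y > X) = (λ/(λ+μ)) · (1 − F(x))^{λ+μ} for all real x. -/
/-!
Conditioning on `X` and using independence, the probability is
`∫_{s > x} (1 - F_Y s) dP_X(s)`, and `1 - F_Y = (1 - F_X)^(μ/λ)`. As `F_X = 1 - (1 - F)^λ` is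
continuous, `F_X(X)` is uniform on `[0, 1]` (probability integral transform), so the integral is
`∫_{F_X x}^1 (1 - u)^(μ/λ) du = (1 - F_X x)^(μ/λ + 1) / (μ/λ + 1) = λ/(λ+μ) (1 - F x)^(λ+μ)`.
-/

open MeasureTheory ProbabilityTheory Filter Set

open scoped ENNReal

section CDF

lemma exists_cdf_eq {ν : Measure ℝ} (hC : Continuous (cdf ν)) {u : ℝ} (hu0 : 0 < u)
    (hu1 : u < 1) : ∃ a, cdf ν a = u := by
  obtain ⟨a, ha⟩ := ((tendsto_cdf_atBot (μ := ν)).eventually (eventually_lt_nhds hu0)).exists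
  obtain ⟨b, hb⟩ := ((tendsto_cdf_atTop (μ := ν)).eventually (eventually_gt_nhds hu1)).exists
  exact intermediate_value_univ a b hC ⟨ha.le, hb.le⟩

variable {ν : Measure ℝ} [IsProbabilityMeasure ν]

lemma ofReal_one_sub_cdf (x : ℝ) : ENNReal.ofReal (1 - cdf ν x) = ν (Ioi x) := by
  rw [cdf_eq_real, ← compl_Iic, prob_compl_eq_one_sub measurableSet_Iic,
    ENNReal.ofReal_sub _ measureReal_nonneg, ENNReal.ofReal_one, ofReal_measureReal]

lemma measureReal_cdf_preimage_Iic (hC : Continuous (cdf ν)) {u : ℝ} (hu0 : 0 ≤ u)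
    (hu1 : u < 1) : ν.real (cdf ν ⁻¹' Iic u) = u := by
  -- squeeze `Iic a ⊆ cdf ν ⁻¹' Iic u ⊆ Iic b` for `cdf ν a = u < v = cdf ν b`, then let `v ↓ u`
  apply le_antisymm
  · refine le_of_forall_gt_imp_ge_of_dense fun v huv => ?_
    rcases lt_or_ge v 1 with hv1 | hv1
    · obtain ⟨b, hb⟩ := exists_cdf_eq hC (hu0.trans_lt huv) hv1
      calc ν.real (cdf ν ⁻¹' Iic u) ≤ ν.real (Iic b) :=
            measureReal_mono fun t ht => ((monotone_cdf ν).reflect_lt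
              ((mem_Iic.1 ht).trans_lt (hb ▸ huv))).le
        _ = v := by rw [← cdf_eq_real, hb]
    · exact measureReal_le_one.trans hv1
  · rcases hu0.eq_or_lt with rfl | hu0
    · exact measureReal_nonneg
    obtain ⟨a, ha⟩ := exists_cdf_eq hC hu0 hu1
    calc u = ν.real (Iic a) := by rw [← cdf_eq_real, ha]
      _ ≤ ν.real (cdf ν ⁻¹' Iic u) :=
          measureReal_mono fun t ht => ((monotone_cdf ν) ht).trans ha.le

theorem map_cdf_eq_volume_restrict (hC : Continuous (cdf ν)) :
    ν.map (cdf ν) = volume.restrict (Icc 0 1) := by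
  have : IsProbabilityMeasure (ν.map (cdf ν)) :=
    Measure.isProbabilityMeasure_map hC.aemeasurable
  refine Measure.ext_of_Iic _ _ fun u => ?_
  rw [Measure.map_apply hC.measurable measurableSet_Iic,
    Measure.restrict_apply measurableSet_Iic]
  rcases lt_or_ge u 0 with hu0 | hu0
  · have hempty : cdf ν ⁻¹' Iic u = ∅ :=
      eq_empty_of_forall_notMem fun t ht => (hu0.trans_le (cdf_nonneg ν t)).not_ge ht
    have hempty' : Iic u ∩ Icc 0 1 = ∅ :=
      eq_empty_of_forall_notMem fun v hv => (hv.1.trans_lt hu0).not_ge hv.2.1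
    rw [hempty, hempty', measure_empty, measure_empty]
  rcases lt_or_ge u 1 with hu1 | hu1
  · have hIcc : Iic u ∩ Icc 0 1 = Icc 0 u :=
      Set.ext fun v =>
        ⟨fun ⟨h1, h2, _⟩ => ⟨h2, h1⟩, fun ⟨h1, h2⟩ => ⟨h2, h1, h2.trans hu1.le⟩⟩
    rw [hIcc, Real.volume_Icc, sub_zero, ← ofReal_measureReal,
      measureReal_cdf_preimage_Iic hC hu0 hu1]
  · have huniv : cdf ν ⁻¹' Iic u = univ :=
      eq_univ_of_forall fun t => (cdf_le_one ν t).trans hu1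
    rw [huniv, inter_eq_right.2 (Icc_subset_Iic_self.trans (Iic_subset_Iic.2 hu1)),
      measure_univ, Real.volume_Icc, sub_zero, ENNReal.ofReal_one]

lemma measure_cdf_preimage_singleton (hC : Continuous (cdf ν)) (c : ℝ) :
    ν (cdf ν ⁻¹' {c}) = 0 := by
  rw [← Measure.map_apply hC.measurable (measurableSet_singleton c),
    map_cdf_eq_volume_restrict hC, measure_singleton]

lemma Ioi_ae_eq_cdf_preimage_Ioi (hC : Continuous (cdf ν)) (x : ℝ) :
    Ioi x =ᵐ[ν] cdf ν ⁻¹' Ioi (cdf ν x) := by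
  refine ae_eq_set.2
    ⟨measure_mono_null (fun s hs => ?_) (measure_cdf_preimage_singleton hC (cdf ν x)),
    measure_mono_null (fun s hs => hs.2 ((monotone_cdf ν).reflect_lt hs.1)) measure_empty⟩
  exact le_antisymm (not_lt.1 hs.2) (monotone_cdf ν (le_of_lt hs.1))

lemma setLIntegral_Ioi_comp_cdf (hC : Continuous (cdf ν)) {f : ℝ → ℝ≥0∞} (hf : Measurable f)
    (x : ℝ) : ∫⁻ s in Ioi x, f (cdf ν s) ∂ν = ∫⁻ u in Ioc (cdf ν x) 1, f u := by
  rw [setLIntegral_congr (Ioi_ae_eq_cdf_preimage_Ioi hC x),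
    ← setLIntegral_map measurableSet_Ioi hf hC.measurable, map_cdf_eq_volume_restrict hC,
    Measure.restrict_restrict measurableSet_Ioi]
  congr 2
  ext u
  exact ⟨fun ⟨h1, _, h2⟩ => ⟨h1, h2⟩, fun ⟨h1, h2⟩ => ⟨h1, (cdf_nonneg ν x).trans h1.le, h2⟩⟩

end CDF

lemma setLIntegral_Ioc_one_sub_rpow {c p : ℝ} (hc : c ≤ 1) (hp : -1 < p) :
    ∫⁻ u in Ioc c 1, ENNReal.ofReal ((1 - u) ^ p)
      = ENNReal.ofReal ((1 - c) ^ (p + 1) / (p + 1)) := by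
  have hint : IntervalIntegrable (fun u => (1 - u) ^ p) volume c 1 := by
    have := (intervalIntegral.intervalIntegrable_rpow' hp (a := 0) (b := 1 - c)).comp_sub_left 1
    simpa using this.symm
  have hnonneg : 0 ≤ᵐ[volume.restrict (Ioc c 1)] fun u => (1 - u) ^ p := by
    filter_upwards [ae_restrict_mem measurableSet_Ioc] with u hu
    exact Real.rpow_nonneg (sub_nonneg.2 hu.2) p
  rw [← ofReal_integral_eq_lintegral_ofReal
      ((intervalIntegrable_iff_integrableOn_Ioc_of_le hc).1 hint) hnonneg,
    ← intervalIntegral.integral_of_le hc,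
    intervalIntegral.integral_comp_sub_left (fun u => u ^ p),
    sub_self, integral_rpow (Or.inl hp), Real.zero_rpow (by linarith), sub_zero]

lemma ProbabilityTheory.IndepFun.measure_lt_lt_eq_setLIntegral {Ω : Type*} [MeasurableSpace Ω]
    {P : Measure Ω} [IsFiniteMeasure P] {X Y : Ω → ℝ} (hind : IndepFun X Y P) (hX : Measurable X)
    (hY : Measurable Y) (x : ℝ) :
    P {ω | x < X ω ∧ X ω < Y ω} = ∫⁻ s in Ioi x, P.map Y (Ioi s) ∂(P.map X) := by
  set E : Set (ℝ × ℝ) := {p | x < p.1 ∧ p.1 < p.2}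
  have hE : MeasurableSet E :=
    (measurableSet_lt measurable_const measurable_fst).inter
      (measurableSet_lt measurable_fst measurable_snd)
  have hslice : ∀ s, Prod.mk s ⁻¹' E = if x < s then Ioi s else ∅ := by
    intro s
    split_ifs with hs <;> ext t <;> simp [E, hs]
  calc P {ω | x < X ω ∧ X ω < Y ω} = P.map (fun ω => (X ω, Y ω)) E :=
        (Measure.map_apply (hX.prodMk hY) hE).symm
    _ = ∫⁻ s, P.map Y (Prod.mk s ⁻¹' E) ∂(P.map X) := by
        rw [hind.map_prod_eq_prod_map_map hX.aemeasurable hY.aemeasurable, Measure.prod_apply hE]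
    _ = ∫⁻ s, (Ioi x).indicator (fun s => P.map Y (Ioi s)) s ∂(P.map X) := by
        congr 1 with s
        by_cases hs : x < s <;> simp [hslice, hs]
    _ = _ := lintegral_indicator measurableSet_Ioi _

lemma cdf_map_eq {Ω : Type*} [MeasurableSpace Ω] {P : Measure Ω} [IsProbabilityMeasure P]
    {X : Ω → ℝ} (hX : Measurable X) (x : ℝ) : cdf (P.map X) x = P.real {ω | X ω ≤ x} := by
  have : IsProbabilityMeasure (P.map X) := Measure.isProbabilityMeasure_map hX.aemeasurable
  rw [cdf_eq_real, map_measureReal_apply hX measurableSet_Iic]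
  rfl

theorem ProbabilityTheory.IndepFun.measure_lt_lt_of_survival_eq_rpow {Ω : Type*}
    [MeasurableSpace Ω] {P : Measure Ω} [IsProbabilityMeasure P] {X Y : Ω → ℝ}
    (hind : IndepFun X Y P) (hX : Measurable X) (hY : Measurable Y)
    (hC : Continuous (cdf (P.map X))) {p : ℝ} (hp : 0 ≤ p)
    (hsurvY : ∀ s, P.map Y (Ioi s) = ENNReal.ofReal ((1 - cdf (P.map X) s) ^ p)) (x : ℝ) :
    P {ω | x < X ω ∧ X ω < Y ω}
      = ENNReal.ofReal ((1 - cdf (P.map X) x) ^ (p + 1) / (p + 1)) := by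
  have : IsProbabilityMeasure (P.map X) := Measure.isProbabilityMeasure_map hX.aemeasurable
  have hf : Measurable fun u : ℝ => ENNReal.ofReal ((1 - u) ^ p) := by fun_prop
  simp only [hind.measure_lt_lt_eq_setLIntegral hX hY, hsurvY]
  rw [setLIntegral_Ioi_comp_cdf hC hf,
    setLIntegral_Ioc_one_sub_rpow (cdf_le_one _ x) (by linarith)]

theorem stmt7_general {Ω : Type*} [MeasurableSpace Ω] (P : Measure Ω) [IsProbabilityMeasure P]
    (X Y : Ω → ℝ) (hX : Measurable X) (hY : Measurable Y)
    (hind : IndepFun X Y P)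
    (F : ℝ → ℝ) (hFcont : Continuous F) (hFmono : Monotone F)
    (hF1 : Tendsto F atTop (nhds 1))
    (lam mu : ℝ) (hlam : 0 < lam) (hmu : 0 < mu)
    (hFX : ∀ x : ℝ, 1 - (P {ω | X ω ≤ x}).toReal = (1 - F x) ^ lam)
    (hFY : ∀ x : ℝ, 1 - (P {ω | Y ω ≤ x}).toReal = (1 - F x) ^ mu) :
    ∀ x : ℝ, (P ({ω | x < min (X ω) (Y ω)} ∩ {ω | X ω < Y ω})).toReal
      = (lam / (lam + mu)) * (1 - F x) ^ (lam + mu) := by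
  intro x
  have hG : ∀ t, 0 ≤ 1 - F t := fun t => sub_nonneg.2 (hFmono.ge_of_tendsto hF1 t)
  have hcdfX : ∀ t, 1 - cdf (P.map X) t = (1 - F t) ^ lam := fun t => by
    rw [cdf_map_eq hX, ← hFX]; rfl
  have hC : Continuous (cdf (P.map X)) := by
    have : Continuous fun t => 1 - (1 - F t) ^ lam :=
      continuous_const.sub ((continuous_const.sub hFcont).rpow_const fun _ => Or.inr hlam.le)
    convert this using 2 with t
    rw [← hcdfX, sub_sub_cancel]
  have hsurvY :
      ∀ s, P.map Y (Ioi s) = ENNReal.ofReal ((1 - cdf (P.map X) s) ^ (mu / lam)) := by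
    intro s
    have : IsProbabilityMeasure (P.map Y) := Measure.isProbabilityMeasure_map hY.aemeasurable
    rw [← ofReal_one_sub_cdf, cdf_map_eq hY, hcdfX, ← Real.rpow_mul (hG s),
      mul_div_cancel₀ _ hlam.ne', ← hFY]
    rfl
  have hevent : {ω | x < min (X ω) (Y ω)} ∩ {ω | X ω < Y ω} = {ω | x < X ω ∧ X ω < Y ω} :=
    Set.ext fun ω => ⟨fun ⟨h1, h2⟩ => ⟨(lt_min_iff.1 h1).1, h2⟩,
      fun ⟨h1, h2⟩ => ⟨lt_min h1 (h1.trans h2), h2⟩⟩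
  rw [hevent, hind.measure_lt_lt_of_survival_eq_rpow hX hY hC (div_pos hmu hlam).le hsurvY,
    ENNReal.toReal_ofReal (div_nonneg (Real.rpow_nonneg (sub_nonneg.2 (cdf_le_one _ x)) _)
      (by positivity)), hcdfX, ← Real.rpow_mul (hG x),
    show lam * (mu / lam + 1) = lam + mu by field_simp; ring]
  field_simp
  ring

/-- If 1 − F_X = (1 − F)^λ and 1 − F_Y = (1 − F)^μ for a continuous cdf F, then
P(min(X,Y) > x, Y > X) = (λ/(λ+μ)) (1 − F(x))^{λ+μ}. -/
theorem stmt7 {Ω : Type*} [MeasurableSpace Ω] (P : Measure Ω) [IsProbabilityMeasure P]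
    (X Y : Ω → ℝ) (hX : Measurable X) (hY : Measurable Y)
    (hind : IndepFun X Y P)
    (F : ℝ → ℝ) (hFcont : Continuous F) (hFmono : Monotone F)
    (hF0 : Tendsto F atBot (nhds 0)) (hF1 : Tendsto F atTop (nhds 1))
    (lam mu : ℝ) (hlam : 0 < lam) (hmu : 0 < mu)
    (hFX : ∀ x : ℝ, 1 - (P {ω | X ω ≤ x}).toReal = (1 - F x) ^ lam)
    (hFY : ∀ x : ℝ, 1 - (P {ω | Y ω ≤ x}).toReal = (1 - F x) ^ mu) :
    ∀ x : ℝ, (P ({ω | x < min (X ω) (Y ω)} ∩ {ω | X ω < Y ω})).toReal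
      = (lam / (lam + mu)) * (1 - F x) ^ (lam + mu) :=
  stmt7_general P X Y hX hY hind F hFcont hFmono hF1 lam mu hlam hmu hFX hFY
end

section
/- Let X, Y be almost surely finite independent real-valued random variables with P(X = Y) = 0 and P(Y > X) ∈ (0,1). Then min(X,Y) and the event {Y > X} are independent if and only if there exists a continuous cdf F and constants λ, μ > 0 such that 1 − F_X(x) = (1 − F(x))^λ and 1 − F_Y(x) = (1 − F(x))^μ for all real x. -/
/-!
Write `u`, `v`, `G = u v` for the survival functions of `X`, `Y`, `min X Y`, let `p = P(X < Y)`
and `H x = P(x < X, X < Y)`. Conditioning on `X`, the increment `H x - H y` lies between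
`(u x - u y) v y` and `(u x - u y) v x`: `H` is the Stieltjes primitive `∫_{(x,∞)} v d(-u)`.
Independence of `min X Y` and `{X < Y}` says `H = p G`.

(⇒) An atom of `min X Y` at `t` splits, in proportions `p : 1 - p`, into an atom of `X` and an
atom of `Y` at `t`; as `X` and `Y` have no common atom, `min X Y` has none and `G` is continuous.
Then `d(log u) = du / u = p dG / G = p d(log G)`, so `u = G ^ p`, and symmetrically
`v = G ^ (1 - p)`; take `F = 1 - G`.

(⇐) If `u = g ^ λ` and `v = g ^ μ`, weighted AM-GM shows that `λ / (λ + μ) · u v` obeys the same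
two-sided bounds as `H`. With `v` continuous such primitives differ by a constant, so
`H = λ / (λ + μ) · G`, and `x → -∞` gives `p = λ / (λ + μ)`.
-/

open MeasureTheory ProbabilityTheory Filter Set Topology

/-- `f x - f y` behaves like the Stieltjes integral `∫_{(x,y]} v d(-u)`: it lies between the
values obtained by freezing the integrand `v` at either endpoint. -/
def IsStieltjesPrimitiveOn (f u v : ℝ → ℝ) (s : Set ℝ) : Prop :=
  ∀ x ∈ s, ∀ y ∈ s, x ≤ y → f x - f y ∈ uIcc ((u x - u y) * v x) ((u x - u y) * v y)

theorem abs_sub_le_of_forall_abs_sub_le {φ ψ : ℝ → ℝ} {a b δ : ℝ} (hab : a ≤ b) (hδ : 0 < δ)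
    (h : ∀ x ∈ Icc a b, ∀ y ∈ Icc a b, x ≤ y → y - x < δ → |φ x - φ y| ≤ ψ x - ψ y) :
    |φ a - φ b| ≤ ψ a - ψ b := by
  set c : ℕ → ℝ := fun n => min (a + n * (δ / 2)) b
  have hc_mem : ∀ n, c n ∈ Icc a b := fun n =>
    ⟨le_min (le_add_of_nonneg_right (by positivity)) hab, min_le_right _ _⟩
  have hc_step : ∀ n, c n ≤ c (n + 1) ∧ c (n + 1) - c n < δ := by
    intro n
    simp only [c, Nat.cast_succ]
    constructor
    · exact min_le_min_right _ (by linarith)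
    · rcases min_cases (a + n * (δ / 2)) b with h₁ | h₁ <;>
        rcases min_cases (a + (n + 1) * (δ / 2)) b with h₂ | h₂ <;> linarith
  have key : ∀ n, |φ a - φ (c n)| ≤ ψ a - ψ (c n) := by
    intro n
    induction n with
    | zero => simp [c, hab]
    | succ n ih =>
      have := h _ (hc_mem n) _ (hc_mem (n + 1)) (hc_step n).1 (hc_step n).2
      linarith [abs_sub_le (φ a) (φ (c n)) (φ (c (n + 1)))]
  obtain ⟨n, hn⟩ := exists_nat_ge ((b - a) / (δ / 2))
  have hcn : c n = b := min_eq_right (by rw [div_le_iff₀ (by positivity)] at hn; linarith)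
  simpa [hcn] using key n

namespace IsStieltjesPrimitiveOn

variable {f g u v : ℝ → ℝ} {s : Set ℝ}

theorem mono {t : Set ℝ} (h : IsStieltjesPrimitiveOn f u v s) (hts : t ⊆ s) :
    IsStieltjesPrimitiveOn f u v t :=
  fun x hx y hy hxy => h x (hts hx) y (hts hy) hxy

theorem const_mul (h : IsStieltjesPrimitiveOn f u v s) (c : ℝ) :
    IsStieltjesPrimitiveOn (fun x => c * f x) u (fun x => c * v x) s := by
  intro x hx y hy hxy
  have := mem_image_of_mem (c * ·) (h x hx y hy hxy)
  rw [image_const_mul_uIcc] at this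
  simpa only [mul_sub, mul_left_comm c] using this

theorem sub_eq_sub {a b : ℝ} (hab : a ≤ b) (hu : AntitoneOn u (Icc a b))
    (hv : ContinuousOn v (Icc a b)) (hf : IsStieltjesPrimitiveOn f u v (Icc a b))
    (hg : IsStieltjesPrimitiveOn g u v (Icc a b)) : f a - f b = g a - g b := by
  have hu_ab : 0 ≤ u a - u b := sub_nonneg.2 (hu ⟨le_rfl, hab⟩ ⟨hab, le_rfl⟩ hab)
  have hsmall : ∀ ε > 0, |(f a - g a) - (f b - g b)| ≤ ε * u a - ε * u b := by
    intro ε hε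
    obtain ⟨δ, hδ, hvδ⟩ := Metric.uniformContinuousOn_iff.1
      (isCompact_Icc.uniformContinuousOn_of_continuous hv) ε hε
    refine abs_sub_le_of_forall_abs_sub_le (φ := fun x => f x - g x) (ψ := fun x => ε * u x)
      hab hδ fun x hx y hy hxy hyx => ?_
    have hvxy : |v x - v y| ≤ ε := (hvδ x hx y hy (by
      rw [Real.dist_eq, abs_sub_comm, abs_of_nonneg (sub_nonneg.2 hxy)]; exact hyx)).le
    have hΔu : 0 ≤ u x - u y := sub_nonneg.2 (hu hx hy hxy)
    calc |(f x - g x) - (f y - g y)| = |(g x - g y) - (f x - f y)| := by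
          rw [← abs_neg]; ring_nf
      _ ≤ |(u x - u y) * v y - (u x - u y) * v x| :=
          abs_sub_le_of_uIcc_subset_uIcc (uIcc_subset_uIcc (hf x hx y hy hxy) (hg x hx y hy hxy))
      _ = (u x - u y) * |v x - v y| := by
          rw [← mul_sub, abs_mul, abs_of_nonneg hΔu, abs_sub_comm]
      _ ≤ (u x - u y) * ε := mul_le_mul_of_nonneg_left hvxy hΔu
      _ = ε * u x - ε * u y := by ring
  have hzero : |(f a - g a) - (f b - g b)| ≤ 0 := by
    refine le_of_forall_pos_le_add fun ε hε => ?_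
    calc |(f a - g a) - (f b - g b)| ≤ ε / (u a - u b + 1) * u a - ε / (u a - u b + 1) * u b :=
          hsmall _ (by positivity)
      _ ≤ 0 + ε := by
          rw [← mul_sub, zero_add, div_mul_eq_mul_div, div_le_iff₀ (by positivity)]; nlinarith
  linarith [abs_nonpos_iff.1 hzero]

theorem eq_of_tendsto_sub (hu : Antitone u) (hv : Continuous v)
    (hf : IsStieltjesPrimitiveOn f u v univ) (hg : IsStieltjesPrimitiveOn g u v univ)
    (hfg : Tendsto (fun x => f x - g x) atTop (𝓝 0)) : f = g := by
  funext x
  have hconst : (fun y => f y - g y) =ᶠ[atTop] fun _ => f x - g x := by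
    filter_upwards [eventually_ge_atTop x] with y hy
    have := sub_eq_sub hy (hu.antitoneOn _) hv.continuousOn (hf.mono (subset_univ _))
      (hg.mono (subset_univ _))
    linarith
  exact sub_eq_zero.1 (tendsto_nhds_unique (hfg.congr' hconst) tendsto_const_nhds).symm

end IsStieltjesPrimitiveOn

theorem sub_div_le_log_sub_log {x y : ℝ} (hx : 0 < x) (hy : 0 < y) :
    (x - y) / x ≤ Real.log x - Real.log y := by
  have := Real.one_sub_inv_le_log_of_pos (div_pos hx hy)
  rwa [Real.log_div hx.ne' hy.ne', inv_div, one_sub_div hx.ne'] at this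

theorem log_sub_log_le_sub_div {x y : ℝ} (hx : 0 < x) (hy : 0 < y) :
    Real.log x - Real.log y ≤ (x - y) / y := by
  have := Real.log_le_sub_one_of_pos (div_pos hx hy)
  rwa [Real.log_div hx.ne' hy.ne', div_sub_one hy.ne'] at this

theorem isStieltjesPrimitiveOn_log {G : ℝ → ℝ} {s : Set ℝ} (hG0 : ∀ x ∈ s, 0 < G x) :
    IsStieltjesPrimitiveOn (fun x => Real.log (G x)) G (fun x => (G x)⁻¹) s := by
  intro x hx y hy _
  simp only [← div_eq_mul_inv]
  exact mem_uIcc.2 (Or.inl ⟨sub_div_le_log_sub_log (hG0 x hx) (hG0 y hy),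
    log_sub_log_le_sub_div (hG0 x hx) (hG0 y hy)⟩)

/-- From `p dG ≈ v du` with `G = u v` one gets `d(log u) = du / u ≈ p dG / G`. -/
theorem IsStieltjesPrimitiveOn.log_of_mul {u v : ℝ → ℝ} {p : ℝ} {s : Set ℝ}
    (hu : AntitoneOn u s) (hv : AntitoneOn v s) (hu0 : ∀ x ∈ s, 0 < u x)
    (hv0 : ∀ x ∈ s, 0 < v x) (h : IsStieltjesPrimitiveOn (fun x => p * (u x * v x)) u v s) :
    IsStieltjesPrimitiveOn (fun x => Real.log (u x)) (fun x => u x * v x)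
      (fun x => p * (u x * v x)⁻¹) s := by
  intro x hx y hy hxy
  have hux := hu0 x hx
  have huy := hu0 y hy
  have hvx := hv0 x hx
  have hvy := hv0 y hy
  have hΔu : 0 ≤ u x - u y := sub_nonneg.2 (hu hx hy hxy)
  have hend : (u x - u y) * v y ≤ (u x - u y) * v x :=
    mul_le_mul_of_nonneg_left (hv hx hy hxy) hΔu
  obtain ⟨hlo, hhi⟩ := uIcc_of_ge hend ▸ h x hx y hy hxy
  refine mem_uIcc.2 (Or.inl ⟨?_, ?_⟩)
  · calc (u x * v x - u y * v y) * (p * (u x * v x)⁻¹)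
          = (p * (u x * v x) - p * (u y * v y)) / v x / u x := by field_simp
      _ ≤ (u x - u y) * v x / v x / u x := by gcongr
      _ = (u x - u y) / u x := by field_simp
      _ ≤ _ := sub_div_le_log_sub_log hux huy
  · calc Real.log (u x) - Real.log (u y) ≤ (u x - u y) / u y := log_sub_log_le_sub_div hux huy
      _ = (u x - u y) * v y / v y / u y := by field_simp
      _ ≤ (p * (u x * v x) - p * (u y * v y)) / v y / u y := by gcongr
      _ = (u x * v x - u y * v y) * (p * (u y * v y)⁻¹) := by field_simp

theorem isStieltjesPrimitiveOn_mul_rpow {G : ℝ → ℝ} (hG : ∀ x, 0 ≤ G x) {a : ℝ} (ha0 : 0 ≤ a)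
    (ha1 : a ≤ 1) (s : Set ℝ) :
    IsStieltjesPrimitiveOn (fun x => a * G x) (fun x => G x ^ a) (fun x => G x ^ (1 - a)) s := by
  intro x _ y _ _
  have hsplit : ∀ z, G z ^ a * G z ^ (1 - a) = G z := fun z => by
    rw [← Real.rpow_add' (hG z) (by norm_num), add_sub_cancel, Real.rpow_one]
  have hxy := Real.geom_mean_le_arith_mean2_weighted ha0 (sub_nonneg.2 ha1) (hG x) (hG y)
    (add_sub_cancel a 1)
  have hyx := Real.geom_mean_le_arith_mean2_weighted ha0 (sub_nonneg.2 ha1) (hG y) (hG x)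
    (add_sub_cancel a 1)
  refine mem_uIcc.2 (Or.inr ⟨?_, ?_⟩)
  · calc (G x ^ a - G y ^ a) * G y ^ (1 - a) = G x ^ a * G y ^ (1 - a) - G y := by
          rw [sub_mul, hsplit]
      _ ≤ a * G x - a * G y := by linarith
  · calc a * G x - a * G y ≤ G x - G y ^ a * G x ^ (1 - a) := by linarith
      _ = (G x ^ a - G y ^ a) * G x ^ (1 - a) := by rw [sub_mul, hsplit]

theorem isStieltjesPrimitiveOn_mul_rpow_rpow {g : ℝ → ℝ} (hg : ∀ x, 0 ≤ g x) {lam mu : ℝ}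
    (hlam : 0 < lam) (hmu : 0 < mu) (s : Set ℝ) :
    IsStieltjesPrimitiveOn (fun x => lam / (lam + mu) * (g x ^ lam * g x ^ mu))
      (fun x => g x ^ lam) (fun x => g x ^ mu) s := by
  have hlm : 0 < lam + mu := add_pos hlam hmu
  have hpow : ∀ x c, (g x ^ (lam + mu)) ^ (c / (lam + mu)) = g x ^ c := fun x c => by
    rw [← Real.rpow_mul (hg x), mul_div_cancel₀ _ hlm.ne']
  have h := isStieltjesPrimitiveOn_mul_rpow (G := fun x => g x ^ (lam + mu))
    (fun x => Real.rpow_nonneg (hg x) _) (div_nonneg hlam.le hlm.le)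
    ((div_le_one hlm).2 (by linarith)) s
  have h1 : 1 - lam / (lam + mu) = mu / (lam + mu) := by field_simp; ring
  simp only [h1, hpow] at h
  simpa only [Real.rpow_add' (hg _) hlm.ne'] using h

theorem eq_rpow_of_isStieltjesPrimitiveOn_of_pos {u v : ℝ → ℝ} {p : ℝ} (hu : Antitone u)
    (hv : Antitone v) (hu0 : ∀ x, 0 ≤ u x) (hv0 : ∀ x, 0 ≤ v x)
    (hG : Continuous fun x => u x * v x) (hu1 : Tendsto u atBot (𝓝 1))
    (hv1 : Tendsto v atBot (𝓝 1))
    (h : IsStieltjesPrimitiveOn (fun x => p * (u x * v x)) u v univ) {x : ℝ}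
    (hx : 0 < u x * v x) : u x = (u x * v x) ^ p := by
  have hpos : ∀ y ≤ x, 0 < u y ∧ 0 < v y := fun y hy => by
    have hy : 0 < u y * v y := hx.trans_le (mul_le_mul (hu hy) (hv hy) (hv0 x) (hu0 y))
    exact ⟨pos_of_mul_pos_left hy (hv0 y), pos_of_mul_pos_right hy (hu0 y)⟩
  have hincr : ∀ a ≤ x, Real.log (u a) - Real.log (u x)
      = p * Real.log (u a * v a) - p * Real.log (u x * v x) := by
    intro a hax
    have hu' : ∀ y ∈ Icc a x, 0 < u y := fun y hy => (hpos y hy.2).1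
    have hv' : ∀ y ∈ Icc a x, 0 < v y := fun y hy => (hpos y hy.2).2
    have hG' : ∀ y ∈ Icc a x, 0 < u y * v y := fun y hy => mul_pos (hu' y hy) (hv' y hy)
    refine IsStieltjesPrimitiveOn.sub_eq_sub hax
      (fun y _ z _ hyz => mul_le_mul (hu hyz) (hv hyz) (hv0 z) (hu0 y))
      (continuousOn_const.mul (hG.continuousOn.inv₀ fun y hy => (hG' y hy).ne'))
      ((h.mono (subset_univ _)).log_of_mul (hu.antitoneOn _) (hv.antitoneOn _) hu' hv')
      ((isStieltjesPrimitiveOn_log hG').const_mul p)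
  have hlim : Tendsto (fun a => Real.log (u a) - p * Real.log (u a * v a)) atBot
      (𝓝 (Real.log 1 - p * Real.log (1 * 1))) :=
    ((Real.continuousAt_log one_ne_zero).tendsto.comp hu1).sub
      (((Real.continuousAt_log (by norm_num)).tendsto.comp (hu1.mul hv1)).const_mul p)
  have hconst : (fun a => Real.log (u a) - p * Real.log (u a * v a))
      =ᶠ[atBot] fun _ => Real.log (u x) - p * Real.log (u x * v x) := by
    filter_upwards [eventually_le_atBot x] with a ha
    linarith [hincr a ha]
  have hlog : Real.log (u x) = p * Real.log (u x * v x) := by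
    have := tendsto_nhds_unique (hlim.congr' hconst) tendsto_const_nhds
    simp only [Real.log_one, mul_one, mul_zero, sub_zero] at this
    linarith
  rw [Real.rpow_def_of_pos hx, mul_comm, ← hlog, Real.exp_log (hpos x le_rfl).1]

theorem eq_rpow_of_isStieltjesPrimitiveOn {u v : ℝ → ℝ} {p : ℝ} (hp : 0 < p) (hu : Antitone u)
    (hv : Antitone v) (hu0 : ∀ x, 0 ≤ u x) (hv0 : ∀ x, 0 ≤ v x)
    (hG : Continuous fun x => u x * v x) (hu1 : Tendsto u atBot (𝓝 1))
    (hv1 : Tendsto v atBot (𝓝 1))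
    (h : IsStieltjesPrimitiveOn (fun x => p * (u x * v x)) u v univ) (x : ℝ) :
    u x = (u x * v x) ^ p := by
  rcases (mul_nonneg (hu0 x) (hv0 x)).lt_or_eq with hx | hx
  · exact eq_rpow_of_isStieltjesPrimitiveOn_of_pos hu hv hu0 hv0 hG hu1 hv1 h hx
  rw [← hx, Real.zero_rpow hp.ne']
  obtain ⟨a, ha, hax⟩ : ∃ a, 1 / 2 < u a * v a ∧ a ≤ x :=
    (((hu1.mul hv1).eventually (lt_mem_nhds (by norm_num))).and (eventually_le_atBot x)).exists
  have hbound : ∀ ε ∈ Ioo (0 : ℝ) (1 / 2), u x ≤ ε ^ p := by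
    rintro ε ⟨hε0, hε1⟩
    obtain ⟨s, hs, hsε : u s * v s = ε⟩ := intermediate_value_Icc' hax hG.continuousOn
      ⟨hx ▸ hε0.le, (hε1.trans ha).le⟩
    calc u x ≤ u s := hu hs.2
      _ = ε ^ p := hsε ▸ eq_rpow_of_isStieltjesPrimitiveOn_of_pos hu hv hu0 hv0 hG hu1 hv1 h
            (hsε ▸ hε0)
  have hlim : Tendsto (fun ε : ℝ => ε ^ p) (𝓝[>] 0) (𝓝 0) := by
    simpa [Real.zero_rpow hp.ne'] using
      ((Real.continuousAt_rpow_const 0 p (Or.inr hp.le)).tendsto.mono_left nhdsWithin_le_nhds)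
  exact le_antisymm (ge_of_tendsto hlim (eventually_of_mem (Ioo_mem_nhdsGT (by norm_num)) hbound))
    (hu0 x)

theorem StieltjesFunction.continuousAt_of_measure_singleton (f : StieltjesFunction ℝ) {a : ℝ}
    (h : f.measure {a} = 0) : ContinuousAt f a := by
  rw [f.measure_singleton, ENNReal.ofReal_eq_zero, sub_nonpos] at h
  rw [f.mono.continuousAt_iff_leftLim_eq_rightLim, f.rightLim_eq]
  exact le_antisymm (f.mono.leftLim_le le_rfl) h

theorem continuous_cdf_of_measure_singleton {ρ : Measure ℝ} [IsProbabilityMeasure ρ]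
    (h : ∀ t, ρ {t} = 0) : Continuous (cdf ρ) :=
  continuous_iff_continuousAt.2 fun t =>
    (cdf ρ).continuousAt_of_measure_singleton (by rw [measure_cdf]; exact h t)

theorem lt_min_inter_lt_eq {Ω : Type*} {X Y : Ω → ℝ} (x : ℝ) :
    {ω | x < min (X ω) (Y ω)} ∩ {ω | X ω < Y ω} = {ω | x < X ω} ∩ {ω | X ω < Y ω} := by
  ext ω
  simp only [mem_inter_iff, mem_ofPred_eq, lt_min_iff]
  exact ⟨fun h => ⟨h.1.1, h.2⟩, fun h => ⟨⟨h.1, h.1.trans h.2⟩, h.2⟩⟩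

section Probability

variable {Ω : Type*} [MeasurableSpace Ω] {P : Measure Ω} {X Y : Ω → ℝ}

theorem measureReal_lt_eq_one_sub_measureReal_le [IsProbabilityMeasure P] {Z : Ω → ℝ}
    (hZ : Measurable Z) (x : ℝ) :
    P.real {ω | x < Z ω} = 1 - P.real {ω | Z ω ≤ x} := by
  have hm : MeasurableSet {ω | Z ω ≤ x} := hZ measurableSet_Iic
  rw [← probReal_compl_eq_one_sub hm]
  congr 1
  ext ω
  simp

theorem measureReal_lt_eq_one_sub_cdf [IsProbabilityMeasure P] {Z : Ω → ℝ} (hZ : Measurable Z)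
    (x : ℝ) :
    P.real {ω | x < Z ω} = 1 - cdf (P.map Z) x := by
  have := Measure.isProbabilityMeasure_map (μ := P) hZ.aemeasurable
  rw [cdf_eq_real, map_measureReal_apply hZ measurableSet_Iic,
    measureReal_lt_eq_one_sub_measureReal_le hZ]
  rfl

theorem antitone_measureReal_lt [IsFiniteMeasure P] (Z : Ω → ℝ) :
    Antitone fun x => P.real {ω | x < Z ω} :=
  fun _ _ hxy => measureReal_mono fun _ h => hxy.trans_lt h

theorem tendsto_measureReal_lt_atBot [IsProbabilityMeasure P] {Z : Ω → ℝ} (hZ : Measurable Z) :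
    Tendsto (fun x => P.real {ω | x < Z ω}) atBot (𝓝 1) := by
  simpa [measureReal_lt_eq_one_sub_cdf hZ] using (tendsto_cdf_atBot (P.map Z)).const_sub 1

theorem tendsto_measureReal_lt_atTop [IsProbabilityMeasure P] {Z : Ω → ℝ} (hZ : Measurable Z) :
    Tendsto (fun x => P.real {ω | x < Z ω}) atTop (𝓝 0) := by
  simpa [measureReal_lt_eq_one_sub_cdf hZ] using (tendsto_cdf_atTop (P.map Z)).const_sub 1

theorem tendsto_measureReal_lt_inter_atBot [IsFiniteMeasure P] (Z : Ω → ℝ) (A : Set Ω) :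
    Tendsto (fun x => P.real ({ω | x < Z ω} ∩ A)) atBot (𝓝 (P.real A)) := by
  have hA : (⋃ x : ℝ, {ω | x < Z ω} ∩ A) = A := by
    rw [← iUnion_inter, inter_eq_right]
    exact fun ω _ => mem_iUnion.2 ⟨Z ω - 1, by simp⟩
  have := tendsto_measure_iUnion_atBot (μ := P) (s := fun x : ℝ => {ω | x < Z ω} ∩ A)
    (fun x y hxy => inter_subset_inter_left A fun ω (h : y < Z ω) => hxy.trans_lt h)
  rw [hA] at this
  exact (ENNReal.tendsto_toReal (measure_ne_top P A)).comp this

/-- The events `{x < m}` form a π-system generating `σ(m)`. -/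
theorem indep_comap_of_measureReal_lt_inter [IsProbabilityMeasure P] {m : Ω → ℝ}
    (hm : Measurable m) {A : Set Ω} (hA : MeasurableSet A)
    (h : ∀ x, P.real ({ω | x < m ω} ∩ A) = P.real {ω | x < m ω} * P.real A) :
    Indep (MeasurableSpace.comap m inferInstance) (MeasurableSpace.generateFrom {A}) P := by
  refine IndepSets.indep hm.comap_le (MeasurableSpace.generateFrom_le (by simpa using hA))
    (isPiSystem_Ioi.comap m) (IsPiSystem.singleton A)
    (by rw [BorelSpace.measurable_eq (α := ℝ), borel_eq_generateFrom_Ioi,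
      MeasurableSpace.comap_generateFrom]; rfl) rfl ((IndepSets_iff _ _ _).2 ?_)
  rintro _ _ ⟨_, ⟨x, rfl⟩, rfl⟩ rfl
  have := h x
  simp only [Measure.real, ← ENNReal.toReal_mul] at this
  exact (ENNReal.toReal_eq_toReal_iff' (by finiteness) (by finiteness)).1 this


theorem measureReal_lt_min (hind : IndepFun X Y P) (x : ℝ) :
    P.real {ω | x < min (X ω) (Y ω)} = P.real {ω | x < X ω} * P.real {ω | x < Y ω} := by
  have hset : {ω | x < min (X ω) (Y ω)} = X ⁻¹' Ioi x ∩ Y ⁻¹' Ioi x := by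
    ext ω
    simp
  simp only [hset, Measure.real, hind.measure_inter_preimage_eq_mul _ _ measurableSet_Ioi
    measurableSet_Ioi, ENNReal.toReal_mul]
  rfl

/-- Conditioning on `X`, `P(x < X ≤ y, X < Y)` is an average of `P(Y > s)` over `s ∈ (x, y]`. -/
theorem isStieltjesPrimitiveOn_measureReal_lt_lt [IsFiniteMeasure P] (hX : Measurable X)
    (hY : Measurable Y) (hind : IndepFun X Y P) :
    IsStieltjesPrimitiveOn (fun x => P.real ({ω | x < X ω} ∩ {ω | X ω < Y ω}))
      (fun x => P.real {ω | x < X ω}) (fun x => P.real {ω | x < Y ω}) univ := by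
  intro x _ y _ hxy
  have hprod : ∀ z, P.real (X ⁻¹' Ioc x y ∩ Y ⁻¹' Ioi z)
      = P.real (X ⁻¹' Ioc x y) * P.real {ω | z < Y ω} := fun z => by
    simp only [Measure.real, hind.measure_inter_preimage_eq_mul _ _ measurableSet_Ioc
      measurableSet_Ioi, ENNReal.toReal_mul]
    rfl
  have hΔ : ∀ A, MeasurableSet A → P.real ({ω | x < X ω} ∩ A) - P.real ({ω | y < X ω} ∩ A)
      = P.real (X ⁻¹' Ioc x y ∩ A) := fun A hA => by
    have hsub : {ω | y < X ω} ⊆ {ω | x < X ω} := fun ω (h : y < X ω) => hxy.trans_lt h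
    rw [← measureReal_sdiff (inter_subset_inter_left A hsub) ((hX measurableSet_Ioi).inter hA),
      ← inter_sdiff_distrib_right]
    congr 2
    ext ω
    simp [and_comm]
  have hΔu := hΔ univ MeasurableSet.univ
  simp only [inter_univ] at hΔu
  rw [hΔ _ (measurableSet_lt hX hY), hΔu, ← hprod, ← hprod]
  refine mem_uIcc.2 (Or.inr ⟨measureReal_mono ?_, measureReal_mono ?_⟩)
  · rintro ω ⟨hX', hY'⟩
    exact ⟨hX', hX'.2.trans_lt hY'⟩
  · rintro ω ⟨hX', hXY⟩
    exact ⟨hX', hX'.1.trans hXY⟩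

theorem measureReal_lt_min_eq_add [IsFiniteMeasure P] (hX : Measurable X) (hY : Measurable Y)
    (hXY : P {ω | X ω = Y ω} = 0) (x : ℝ) :
    P.real {ω | x < min (X ω) (Y ω)}
      = P.real ({ω | x < X ω} ∩ {ω | X ω < Y ω}) + P.real ({ω | x < Y ω} ∩ {ω | Y ω < X ω}) := by
  rw [← measureReal_inter_add_sdiff (s := {ω | x < min (X ω) (Y ω)}) (measurableSet_lt hX hY),
    lt_min_inter_lt_eq]
  congr 1
  refine (measureReal_eq_measureReal_of_null_sdiff ?_ ?_).symm
  · rintro ω ⟨hY', hYX⟩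
    exact ⟨show x < min (X ω) (Y ω) from lt_min (hY'.trans hYX) hY',
      fun h : X ω < Y ω => h.not_gt hYX⟩
  · refine measureReal_mono_null (s₂ := {ω | X ω = Y ω}) (fun ω h => ?_)
      (by simp [Measure.real, hXY])
    simp only [Set.mem_sdiff, mem_inter_iff, mem_ofPred_eq, lt_min_iff, not_lt, not_and] at h ⊢
    exact le_antisymm (h.2 h.1.1.2) h.1.2

theorem measure_preimage_min_singleton_eq_zero [IsProbabilityMeasure P] (hind : IndepFun X Y P)
    (hXY : P {ω | X ω = Y ω} = 0)
    (hE : Indep (MeasurableSpace.comap (fun ω => min (X ω) (Y ω)) inferInstance)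
      (MeasurableSpace.generateFrom {{ω | X ω < Y ω}}) P)
    (hE0 : P {ω | X ω < Y ω} ≠ 0) (hE1 : P {ω | X ω < Y ω}ᶜ ≠ 0) (t : ℝ) :
    P ((fun ω => min (X ω) (Y ω)) ⁻¹' {t}) = 0 := by
  have ht : MeasurableSet[MeasurableSpace.comap (fun ω => min (X ω) (Y ω)) inferInstance]
      ((fun ω => min (X ω) (Y ω)) ⁻¹' {t}) := ⟨{t}, measurableSet_singleton t, rfl⟩
  have hE' := MeasurableSpace.measurableSet_generateFrom (mem_singleton {ω | X ω < Y ω})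
  -- `X` and `Y` have no common atom, and on `{X < Y}` (resp. its complement) an atom of the
  -- minimum at `t` is an atom of `X` (resp. `Y`)
  have hatoms : P (X ⁻¹' {t}) * P (Y ⁻¹' {t}) = 0 := by
    rw [← hind.measure_inter_preimage_eq_mul _ _ (measurableSet_singleton t)
      (measurableSet_singleton t)]
    exact measure_mono_null (fun ω h => (h.1.trans h.2.symm : X ω = Y ω)) hXY
  rcases mul_eq_zero.1 hatoms with hX | hY
  · have h : P ((fun ω => min (X ω) (Y ω)) ⁻¹' {t} ∩ {ω | X ω < Y ω}) = 0 :=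
      measure_mono_null (fun ω h =>
        (min_eq_left (h.2 : X ω < Y ω).le).symm.trans (h.1 : min (X ω) (Y ω) = t)) hX
    rw [(Indep_iff _ _ _).1 hE _ _ ht hE'] at h
    exact (mul_eq_zero.1 h).resolve_right hE0
  · have h : P ((fun ω => min (X ω) (Y ω)) ⁻¹' {t} ∩ {ω | X ω < Y ω}ᶜ) = 0 :=
      measure_mono_null (fun ω h =>
        (min_eq_right (not_lt.1 ((mem_compl_iff _ _).1 h.2))).symm.trans
          (h.1 : min (X ω) (Y ω) = t)) hY
    rw [(Indep_iff _ _ _).1 hE _ _ ht hE'.compl] at h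
    exact (mul_eq_zero.1 h).resolve_right hE1

theorem continuous_cdf_map_min [IsProbabilityMeasure P] (hX : Measurable X) (hY : Measurable Y)
    (hind : IndepFun X Y P) (hXY : P {ω | X ω = Y ω} = 0) (hp0 : 0 < P.real {ω | X ω < Y ω})
    (hp1 : P.real {ω | X ω < Y ω} < 1)
    (h : ∀ x, P.real ({ω | x < min (X ω) (Y ω)} ∩ {ω | X ω < Y ω})
      = P.real {ω | x < min (X ω) (Y ω)} * P.real {ω | X ω < Y ω}) :
    Continuous (cdf (P.map fun ω => min (X ω) (Y ω))) := by
  have hm : Measurable fun ω => min (X ω) (Y ω) := hX.min hY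
  have hE := measurableSet_lt hX hY
  have := Measure.isProbabilityMeasure_map (μ := P) hm.aemeasurable
  refine continuous_cdf_of_measure_singleton fun t => ?_
  rw [Measure.map_apply hm (measurableSet_singleton t)]
  refine measure_preimage_min_singleton_eq_zero hind hXY
    (indep_comap_of_measureReal_lt_inter hm hE h) ((measureReal_ne_zero_iff).1 hp0.ne')
    ((measureReal_ne_zero_iff).1 ?_) t
  rw [probReal_compl_eq_one_sub hE]
  linarith

theorem measureReal_lt_eq_rpow_of_indep_min [IsProbabilityMeasure P] (hX : Measurable X)
    (hY : Measurable Y) (hind : IndepFun X Y P) (hXY : P {ω | X ω = Y ω} = 0)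
    (hp0 : 0 < P.real {ω | X ω < Y ω}) (hp1 : P.real {ω | X ω < Y ω} < 1)
    (hcont : Continuous (cdf (P.map fun ω => min (X ω) (Y ω))))
    (h : ∀ x, P.real ({ω | x < min (X ω) (Y ω)} ∩ {ω | X ω < Y ω})
      = P.real {ω | x < min (X ω) (Y ω)} * P.real {ω | X ω < Y ω}) (x : ℝ) :
    P.real {ω | x < X ω} = (1 - cdf (P.map fun ω => min (X ω) (Y ω)) x) ^ P.real {ω | X ω < Y ω}
      ∧ P.real {ω | x < Y ω}
        = (1 - cdf (P.map fun ω => min (X ω) (Y ω)) x) ^ (1 - P.real {ω | X ω < Y ω}) := by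
  set p := P.real {ω | X ω < Y ω}
  set u := fun x => P.real {ω | x < X ω}
  set v := fun x => P.real {ω | x < Y ω}
  have hG : ∀ x, u x * v x = 1 - cdf (P.map fun ω => min (X ω) (Y ω)) x := fun x => by
    rw [← measureReal_lt_eq_one_sub_cdf (hX.min hY), measureReal_lt_min hind]
  have hGc : Continuous fun x => u x * v x :=
    (continuous_const.sub hcont).congr fun x => (hG x).symm
  have hH : ∀ x, P.real ({ω | x < X ω} ∩ {ω | X ω < Y ω}) = p * (u x * v x) := fun x => by
    rw [← measureReal_lt_min hind, mul_comm, ← h x, lt_min_inter_lt_eq]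
  have hK : ∀ x, P.real ({ω | x < Y ω} ∩ {ω | Y ω < X ω}) = (1 - p) * (v x * u x) := fun x => by
    have := measureReal_lt_min_eq_add hX hY hXY x
    rw [measureReal_lt_min hind, hH] at this
    linarith
  have hu := eq_rpow_of_isStieltjesPrimitiveOn hp0 (antitone_measureReal_lt X)
    (antitone_measureReal_lt Y) (fun _ => measureReal_nonneg) (fun _ => measureReal_nonneg) hGc
    (tendsto_measureReal_lt_atBot hX) (tendsto_measureReal_lt_atBot hY)
    (funext hH ▸ isStieltjesPrimitiveOn_measureReal_lt_lt hX hY hind) x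
  have hv := eq_rpow_of_isStieltjesPrimitiveOn (sub_pos.2 hp1) (antitone_measureReal_lt Y)
    (antitone_measureReal_lt X) (fun _ => measureReal_nonneg) (fun _ => measureReal_nonneg)
    (by simpa only [mul_comm] using hGc)
    (tendsto_measureReal_lt_atBot hY) (tendsto_measureReal_lt_atBot hX)
    (funext hK ▸ isStieltjesPrimitiveOn_measureReal_lt_lt hY hX hind.symm) x
  rw [← hG]
  exact ⟨hu, mul_comm (u x) (v x) ▸ hv⟩

theorem measureReal_lt_min_inter_eq_mul_of_rpow [IsProbabilityMeasure P] (hX : Measurable X)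
    (hY : Measurable Y) (hind : IndepFun X Y P) {g : ℝ → ℝ} (hg0 : ∀ x, 0 ≤ g x)
    (hgc : Continuous g) {lam mu : ℝ} (hlam : 0 < lam) (hmu : 0 < mu)
    (hu : ∀ x, P.real {ω | x < X ω} = g x ^ lam) (hv : ∀ x, P.real {ω | x < Y ω} = g x ^ mu)
    (x : ℝ) :
    P.real ({ω | x < min (X ω) (Y ω)} ∩ {ω | X ω < Y ω})
      = P.real {ω | x < min (X ω) (Y ω)} * P.real {ω | X ω < Y ω} := by
  have hu' : (fun x => P.real {ω | x < X ω}) = fun x => g x ^ lam := funext hu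
  have hv' : (fun x => P.real {ω | x < Y ω}) = fun x => g x ^ mu := funext hv
  have hu_top : Tendsto (fun x => g x ^ lam) atTop (𝓝 0) := hu' ▸ tendsto_measureReal_lt_atTop hX
  have hv_top : Tendsto (fun x => g x ^ mu) atTop (𝓝 0) := hv' ▸ tendsto_measureReal_lt_atTop hY
  have hH_top : Tendsto (fun x => P.real ({ω | x < X ω} ∩ {ω | X ω < Y ω})) atTop (𝓝 0) :=
    tendsto_of_tendsto_of_tendsto_of_le_of_le tendsto_const_nhds hu_top
      (fun _ => measureReal_nonneg) fun x => hu x ▸ measureReal_mono inter_subset_left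
  have hH : (fun x => P.real ({ω | x < X ω} ∩ {ω | X ω < Y ω}))
      = fun x => lam / (lam + mu) * (g x ^ lam * g x ^ mu) := by
    refine IsStieltjesPrimitiveOn.eq_of_tendsto_sub (hu' ▸ antitone_measureReal_lt X)
      (hgc.rpow_const fun _ => Or.inr hmu.le)
      (hu' ▸ hv' ▸ isStieltjesPrimitiveOn_measureReal_lt_lt hX hY hind)
      (isStieltjesPrimitiveOn_mul_rpow_rpow hg0 hlam hmu univ) ?_
    simpa using hH_top.sub ((hu_top.mul hv_top).const_mul (lam / (lam + mu)))
  have hp : P.real {ω | X ω < Y ω} = lam / (lam + mu) := by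
    refine tendsto_nhds_unique (tendsto_measureReal_lt_inter_atBot X _) ?_
    rw [hH]
    have := ((hu' ▸ tendsto_measureReal_lt_atBot hX).mul
      (hv' ▸ tendsto_measureReal_lt_atBot hY)).const_mul (lam / (lam + mu))
    rwa [mul_one, mul_one] at this
  rw [lt_min_inter_lt_eq, congrFun hH x, measureReal_lt_min hind, hu, hv, hp, mul_comm]

end Probability

/-- Main theorem: min(X,Y) is independent of {Y > X} iff the survival functions of X and Y
are powers of a common continuous survival function. -/
theorem stmt9 {Ω : Type*} [MeasurableSpace Ω] (P : Measure Ω) [IsProbabilityMeasure P]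
    (X Y : Ω → ℝ) (hX : Measurable X) (hY : Measurable Y)
    (hind : IndepFun X Y P) (hXY : P {ω | X ω = Y ω} = 0)
    (hp0 : 0 < (P {ω | X ω < Y ω}).toReal) (hp1 : (P {ω | X ω < Y ω}).toReal < 1) :
    (∀ x : ℝ, (P ({ω | x < min (X ω) (Y ω)} ∩ {ω | X ω < Y ω})).toReal
        = (P {ω | x < min (X ω) (Y ω)}).toReal * (P {ω | X ω < Y ω}).toReal)
    ↔ ∃ F : ℝ → ℝ, Continuous F ∧ Monotone F
        ∧ Tendsto F atBot (nhds 0) ∧ Tendsto F atTop (nhds 1)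
        ∧ ∃ lam > (0:ℝ), ∃ mu > (0:ℝ),
          (∀ x : ℝ, 1 - (P {ω | X ω ≤ x}).toReal = (1 - F x) ^ lam)
          ∧ (∀ x : ℝ, 1 - (P {ω | Y ω ≤ x}).toReal = (1 - F x) ^ mu) := by
  constructor
  · intro h
    have hcont := continuous_cdf_map_min hX hY hind hXY hp0 hp1 h
    have hsurv := measureReal_lt_eq_rpow_of_indep_min hX hY hind hXY hp0 hp1 hcont h
    refine ⟨_, hcont, monotone_cdf _, tendsto_cdf_atBot _, tendsto_cdf_atTop _, _, hp0, _,
      sub_pos.2 hp1, fun x => ?_, fun x => ?_⟩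
    · exact (measureReal_lt_eq_one_sub_measureReal_le hX x).symm.trans (hsurv x).1
    · exact (measureReal_lt_eq_one_sub_measureReal_le hY x).symm.trans (hsurv x).2
  · rintro ⟨F, hFc, hFm, -, hF1, lam, hlam, mu, hmu, hFX, hFY⟩
    refine measureReal_lt_min_inter_eq_mul_of_rpow hX hY hind
      (fun x => sub_nonneg.2 (hFm.ge_of_tendsto hF1 x)) (continuous_const.sub hFc) hlam hmu
      (fun x => ?_) (fun x => ?_)
    · exact (measureReal_lt_eq_one_sub_measureReal_le hX x).trans (hFX x)
    · exact (measureReal_lt_eq_one_sub_measureReal_le hY x).trans (hFY x)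
end

section
/- If (X,Y) is exchangeable with P(X = Y) = 0, then min(X,Y) is independent of the event {Y > X}, and this can hold even when the common marginal distribution is not continuous: e.g., if P(X=1, Y=0) = P(X=0, Y=1) = 1/2, then min(X,Y) is independent of {Y > X} while the marginal of X is Bernoulli(1/2). -/
open MeasureTheory ProbabilityTheory
open scoped ENNReal

/-! The swap `(x, y) ↦ (y, x)` preserves the law of an exchangeable pair, fixes `min` and
exchanges `{X < Y}` with `{Y < X}`. As `{X = Y}` is null, every event `{min X Y ∈ B}` therefore
splits into two halves of equal mass, giving `P(min X Y ∈ B, X < Y) = P(min X Y ∈ B) / 2` and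
`P(X < Y) = 1 / 2`. In the example the law of `(X, Y)` is `½ δ(1,0) + ½ δ(0,1)`, which is swap
invariant and does not charge the diagonal, so the general statement applies to it. -/

section Exchangeable

variable {Ω α : Type*} [MeasurableSpace Ω] {μ : Measure Ω}
  [LinearOrder α] [TopologicalSpace α] [OrderClosedTopology α] [SecondCountableTopology α]
  [MeasurableSpace α] [OpensMeasurableSpace α]
  {X Y : Ω → α} {B : Set α}

lemma measure_min_mem_inter_lt_eq_of_map_swap (hX : Measurable X) (hY : Measurable Y)
    (hexch : μ.map (fun ω => (X ω, Y ω)) = μ.map (fun ω => (Y ω, X ω))) (hB : MeasurableSet B) :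
    μ ({ω | min (X ω) (Y ω) ∈ B} ∩ {ω | X ω < Y ω})
      = μ ({ω | min (X ω) (Y ω) ∈ B} ∩ {ω | Y ω < X ω}) := by
  have hS : MeasurableSet {p : α × α | min p.1 p.2 ∈ B ∧ p.1 < p.2} :=
    (measurable_fst.min measurable_snd hB).inter measurableSet_lt'
  calc _ = μ.map (fun ω => (X ω, Y ω)) {p | min p.1 p.2 ∈ B ∧ p.1 < p.2} :=
        (Measure.map_apply (hX.prodMk hY) hS).symm
    _ = μ.map (fun ω => (Y ω, X ω)) {p | min p.1 p.2 ∈ B ∧ p.1 < p.2} := by rw [hexch]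
    _ = _ := by
        rw [Measure.map_apply (hY.prodMk hX) hS]
        simp only [Set.preimage_ofPred_eq, min_comm (Y _)]
        rfl

lemma measure_min_mem_eq_two_mul_of_map_swap (hX : Measurable X) (hY : Measurable Y)
    (hexch : μ.map (fun ω => (X ω, Y ω)) = μ.map (fun ω => (Y ω, X ω)))
    (hne : μ {ω | X ω = Y ω} = 0) (hB : MeasurableSet B) :
    μ {ω | min (X ω) (Y ω) ∈ B} = 2 * μ ({ω | min (X ω) (Y ω) ∈ B} ∩ {ω | X ω < Y ω}) := by
  set s := {ω | min (X ω) (Y ω) ∈ B}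
  have hle_ae : {ω | Y ω ≤ X ω} =ᵐ[μ] {ω | Y ω < X ω} := by
    filter_upwards [measure_eq_zero_iff_ae_notMem.1 hne] with ω hω
    simp only [eq_iff_iff] at hω ⊢
    exact ⟨fun h => h.lt_of_ne' hω, le_of_lt⟩
  calc μ s = μ (s ∩ {ω | X ω < Y ω}) + μ (s \ {ω | X ω < Y ω}) :=
        (measure_inter_add_sdiff s (measurableSet_lt hX hY)).symm
    _ = μ (s ∩ {ω | X ω < Y ω}) + μ (s ∩ {ω | Y ω < X ω}) := by
        simp only [Set.sdiff_eq, Set.compl_ofPred, not_lt]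
        rw [measure_congr ((Filter.EventuallyEq.refl _ s).inter hle_ae)]
    _ = 2 * μ (s ∩ {ω | X ω < Y ω}) := by
        rw [← measure_min_mem_inter_lt_eq_of_map_swap hX hY hexch hB, two_mul]

lemma measure_min_mem_inter_lt_eq_mul_of_map_swap [IsProbabilityMeasure μ]
    (hX : Measurable X) (hY : Measurable Y)
    (hexch : μ.map (fun ω => (X ω, Y ω)) = μ.map (fun ω => (Y ω, X ω)))
    (hne : μ {ω | X ω = Y ω} = 0) (hB : MeasurableSet B) :
    μ ({ω | min (X ω) (Y ω) ∈ B} ∩ {ω | X ω < Y ω})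
      = μ {ω | min (X ω) (Y ω) ∈ B} * μ {ω | X ω < Y ω} := by
  have hhalf : μ {ω | X ω < Y ω} = 2⁻¹ := by
    have h := measure_min_mem_eq_two_mul_of_map_swap hX hY hexch hne MeasurableSet.univ
    simp only [Set.mem_univ, Set.ofPred_true, Set.univ_inter, measure_univ] at h
    exact ENNReal.eq_inv_of_mul_eq_one_left (by rw [mul_comm, ← h])
  rw [measure_min_mem_eq_two_mul_of_map_swap hX hY hexch hne hB, hhalf, mul_comm 2, mul_assoc,
    ENNReal.mul_inv_cancel two_ne_zero ENNReal.ofNat_ne_top, mul_one]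

end Exchangeable

lemma MeasureTheory.Measure.eq_smul_dirac_add_smul_dirac {α : Type*} [MeasurableSpace α]
    [MeasurableSingletonClass α] {ν : Measure α} {a b : α} (hab : a ≠ b) (h : ν {a, b}ᶜ = 0) :
    ν = ν {a} • Measure.dirac a + ν {b} • Measure.dirac b := by
  rw [← Measure.restrict_singleton, ← Measure.restrict_singleton,
    ← Measure.restrict_union (Set.disjoint_singleton.2 hab) (measurableSet_singleton b),
    ← Set.insert_eq]
  exact (Measure.restrict_eq_self_of_ae_mem (mem_ae_iff.2 h)).symm

section TwoPoint

variable {Ω β : Type*} [MeasurableSpace Ω] {μ : Measure Ω} [IsProbabilityMeasure μ]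
  [MeasurableSpace β] [MeasurableSingletonClass β]

lemma map_eq_smul_dirac_add_smul_dirac {Z : Ω → β} (hZ : Measurable Z) {a b : β} (hab : a ≠ b)
    (h : μ (Z ⁻¹' {a}) + μ (Z ⁻¹' {b}) = 1) :
    μ.map Z = μ (Z ⁻¹' {a}) • Measure.dirac a + μ (Z ⁻¹' {b}) • Measure.dirac b := by
  have := Measure.isProbabilityMeasure_map (μ := μ) hZ.aemeasurable
  rw [← Measure.map_apply hZ (measurableSet_singleton a),
    ← Measure.map_apply hZ (measurableSet_singleton b)] at h ⊢
  refine Measure.eq_smul_dirac_add_smul_dirac hab ?_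
  rw [prob_compl_eq_zero_iff (Set.toFinite _).measurableSet, Set.insert_eq,
    measure_union (Set.disjoint_singleton.2 hab) (measurableSet_singleton b), h]

lemma map_prodMk_eq_half_dirac_add_half_dirac {X Y : Ω → β} (hX : Measurable X)
    (hY : Measurable Y) {a b : β} (hab : a ≠ b)
    (h_ab : μ {ω | X ω = a ∧ Y ω = b} = 1 / 2) (h_ba : μ {ω | X ω = b ∧ Y ω = a} = 1 / 2) :
    μ.map (fun ω => (X ω, Y ω))
      = (1 / 2 : ℝ≥0∞) • Measure.dirac (a, b) + (1 / 2 : ℝ≥0∞) • Measure.dirac (b, a) := by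
  have hpre (c d : β) : (fun ω => (X ω, Y ω)) ⁻¹' {(c, d)} = {ω | X ω = c ∧ Y ω = d} := by
    ext; simp
  have h := map_eq_smul_dirac_add_smul_dirac (μ := μ) (hX.prodMk hY) (a := (a, b)) (b := (b, a))
    fun h => hab (Prod.ext_iff.1 h).1
  simp only [hpre, h_ab, h_ba] at h
  exact h (ENNReal.add_halves 1)

end TwoPoint

/-- If (X,Y) is exchangeable with P(X=Y)=0 then min(X,Y) is independent of {Y > X};
moreover this can hold with a non-continuous marginal: if
P(X=1,Y=0) = P(X=0,Y=1) = 1/2 then min(X,Y) is independent of {Y > X} and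
the marginal of X is Bernoulli(1/2). -/
theorem stmt12 {Ω : Type*} [MeasurableSpace Ω] (μ : Measure Ω) [IsProbabilityMeasure μ]
    (X Y : Ω → ℝ) (hX : Measurable X) (hY : Measurable Y)
    (h10 : μ {ω | X ω = 1 ∧ Y ω = 0} = 1 / 2)
    (h01 : μ {ω | X ω = 0 ∧ Y ω = 1} = 1 / 2) :
    (∀ (X' Y' : Ω → ℝ), Measurable X' → Measurable Y' →
      Measure.map (fun ω => (X' ω, Y' ω)) μ = Measure.map (fun ω => (Y' ω, X' ω)) μ →
      μ {ω | X' ω = Y' ω} = 0 →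
      ∀ B : Set ℝ, MeasurableSet B →
        (μ ({ω | min (X' ω) (Y' ω) ∈ B} ∩ {ω | X' ω < Y' ω})).toReal
          = (μ {ω | min (X' ω) (Y' ω) ∈ B}).toReal * (μ {ω | X' ω < Y' ω}).toReal)
    ∧ (∀ B : Set ℝ, MeasurableSet B →
        (μ ({ω | min (X ω) (Y ω) ∈ B} ∩ {ω | X ω < Y ω})).toReal
          = (μ {ω | min (X ω) (Y ω) ∈ B}).toReal * (μ {ω | X ω < Y ω}).toReal)
    ∧ μ {ω | X ω = 1} = 1 / 2 ∧ μ {ω | X ω = 0} = 1 / 2 := by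
  have hlaw := map_prodMk_eq_half_dirac_add_half_dirac hX hY one_ne_zero h10 h01
  have hexch : μ.map (fun ω => (X ω, Y ω)) = μ.map (fun ω => (Y ω, X ω)) := by
    rw [hlaw, map_prodMk_eq_half_dirac_add_half_dirac hY hX one_ne_zero
      (by simpa only [and_comm] using h01) (by simpa only [and_comm] using h10)]
  have hlaw_apply : ∀ {S : Set (ℝ × ℝ)}, MeasurableSet S → μ ((fun ω => (X ω, Y ω)) ⁻¹' S)
      = ((1 / 2 : ℝ≥0∞) • Measure.dirac ((1 : ℝ), (0 : ℝ))
          + (1 / 2 : ℝ≥0∞) • Measure.dirac ((0 : ℝ), (1 : ℝ))) S := fun hS => by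
    rw [← Measure.map_apply (hX.prodMk hY) hS, hlaw]
  have hdiag : μ {ω | X ω = Y ω} = 0 :=
    (hlaw_apply measurableSet_diagonal).trans (by simp)
  refine ⟨fun X' Y' hX' hY' hexch' hdiag' B hB => ?_, fun B hB => ?_, ?_, ?_⟩
  · rw [measure_min_mem_inter_lt_eq_mul_of_map_swap hX' hY' hexch' hdiag' hB, ENNReal.toReal_mul]
  · rw [measure_min_mem_inter_lt_eq_mul_of_map_swap hX hY hexch hdiag hB, ENNReal.toReal_mul]
  · exact (hlaw_apply (measurable_fst (measurableSet_singleton (1 : ℝ)))).trans (by simp)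
  · exact (hlaw_apply (measurable_fst (measurableSet_singleton (0 : ℝ)))).trans (by simp)
end
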